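/- Let q_1, q_2 : [0,2π)^ν → ℝ be bounded measurable with η ≤ q_k(x) ≤ M for a.e. x, for some 0 < η ≤ M, and define ψ(t) := −(2π)^{−ν} ∫_{[0,2π)^ν} log[ (1 + q_1(x))^t (1 + q_2(x))^{1−t} − q_1(x)^t q_2(x)^{1−t} ] dx for t ∈ [0,1]. Then ψ is twice differentiable on (0,1), and ψ''(t) > 0 for every t ∈ (0,1) unless q_1(x) = q_2(x) for almost every x (in which case ψ ≡ 0 on [0,1]). -/

import Mathlib

/-!
Pointwise, `A(t) = (1 + q₁)^t (1 + q₂)^(1-t)` and `B(t) = q₁^t q₂^(1-t)` are exponentials in `t`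
with rates `p = log ((1 + q₁) / (1 + q₂))` and `r = log (q₁ / q₂)`, and `A > B` on `[0, 1]`.
A direct computation gives `(log (A - B))'' = -A B (p - r)² / (A - B)²`, which is `≤ 0`, and
`< 0` where `q₁ ≠ q₂` because `s ↦ log (1 + 1/s)` is injective. As functions of
`(q₁, q₂, t)` the integrand and its two `t`-derivatives are continuous on the compact box
`[η, M]² × [0, 1]`, hence bounded there, which justifies differentiating twice under the integral.
-/

open MeasureTheory Filter Set

noncomputable section

/-- The cube `[0, 2π)^ν`. -/
def cube (ν : ℕ) : Set (Fin ν → ℝ) := Set.univ.pi fun _ => Set.Ico 0 (2 * Real.pi)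

/-- `ψ(t) = −(2π)^{−ν} ∫ log[(1+q₁(x))^t (1+q₂(x))^{1−t} − q₁(x)^t q₂(x)^{1−t}] dx`. -/
def psiLimit {ν : ℕ} (q₁ q₂ : (Fin ν → ℝ) → ℝ) (t : ℝ) : ℝ :=
  -(((2 * Real.pi) ^ ν : ℝ)⁻¹ *
    ∫ x in cube ν,
      Real.log ((1 + q₁ x) ^ t * (1 + q₂ x) ^ (1 - t) - (q₁ x) ^ t * (q₂ x) ^ (1 - t)))

open Real Function

namespace PsiLimit

def geomMean (a b t : ℝ) : ℝ := a ^ t * b ^ (1 - t)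

section GeomMean

variable {a b : ℝ}

lemma geomMean_eq_exp (ha : 0 < a) (hb : 0 < b) (t : ℝ) :
    geomMean a b t = exp (t * log a + (1 - t) * log b) := by
  rw [geomMean, rpow_def_of_pos ha, rpow_def_of_pos hb, ← exp_add]
  ring_nf

lemma geomMean_self (ha : 0 < a) (t : ℝ) : geomMean a a t = a := by
  rw [geomMean_eq_exp ha ha, ← add_mul, add_sub_cancel, one_mul, exp_log ha]

lemma geomMean_pos (ha : 0 < a) (hb : 0 < b) (t : ℝ) : 0 < geomMean a b t := by
  rw [geomMean_eq_exp ha hb]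
  exact exp_pos _

lemma geomMean_lt_geomMean {a' b' t : ℝ} (ha : 0 < a) (hb : 0 < b) (haa' : a < a')
    (hbb' : b < b') (ht : t ∈ Icc 0 1) : geomMean a b t < geomMean a' b' t := by
  rw [geomMean_eq_exp ha hb, geomMean_eq_exp (ha.trans haa') (hb.trans hbb'), exp_lt_exp]
  -- `t Δ₁ + (1 - t) Δ₂ ≥ min Δ₁ Δ₂ > 0` for the two log-increments `Δ₁, Δ₂`
  have hmin : 0 < min (log a' - log a) (log b' - log b) :=
    lt_min (sub_pos.2 (log_lt_log ha haa')) (sub_pos.2 (log_lt_log hb hbb'))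
  nlinarith [mul_le_mul_of_nonneg_left (min_le_left (log a' - log a) (log b' - log b)) ht.1,
    mul_le_mul_of_nonneg_left (min_le_right (log a' - log a) (log b' - log b))
      (sub_nonneg.2 ht.2)]

lemma hasDerivAt_geomMean (ha : 0 < a) (hb : 0 < b) (t : ℝ) :
    HasDerivAt (geomMean a b) (geomMean a b t * (log a - log b)) t := by
  rw [funext (geomMean_eq_exp ha hb)]
  exact (((hasDerivAt_id t).mul_const _).add
    (((hasDerivAt_id t).const_sub 1).mul_const _)).exp.congr_deriv (by simp; ring)

@[fun_prop]
lemma ContinuousAt.geomMean {X : Type*} [TopologicalSpace X] {f g h : X → ℝ} {x : X}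
    (hf : ContinuousAt f x) (hg : ContinuousAt g x) (hh : ContinuousAt h x) (hfx : f x ≠ 0)
    (hgx : g x ≠ 0) : ContinuousAt (fun y => geomMean (f y) (g y) (h y)) x :=
  (hf.rpow hh (.inl hfx)).mul (hg.rpow (continuousAt_const.sub hh) (.inl hgx))

end GeomMean

section Pointwise

def gap (u v t : ℝ) : ℝ := geomMean (1 + u) (1 + v) t - geomMean u v t

def logGap (u v t : ℝ) : ℝ := log (gap u v t)

def logGapDeriv (u v t : ℝ) : ℝ :=
  (geomMean (1 + u) (1 + v) t * (log (1 + u) - log (1 + v)) -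
    geomMean u v t * (log u - log v)) / gap u v t

def logGapDeriv2 (u v t : ℝ) : ℝ :=
  -(geomMean (1 + u) (1 + v) t * geomMean u v t *
      ((log (1 + u) - log (1 + v)) - (log u - log v)) ^ 2) / gap u v t ^ 2

variable {u v t : ℝ}

lemma gap_pos (hu : 0 < u) (hv : 0 < v) (ht : t ∈ Icc 0 1) : 0 < gap u v t :=
  sub_pos.2 (geomMean_lt_geomMean hu hv (lt_one_add u) (lt_one_add v) ht)

lemma gap_self (hu : 0 < u) (t : ℝ) : gap u u t = 1 := by
  rw [gap, geomMean_self (by positivity), geomMean_self hu, add_sub_cancel_right]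

lemma hasDerivAt_gap (hu : 0 < u) (hv : 0 < v) (t : ℝ) :
    HasDerivAt (gap u v) (geomMean (1 + u) (1 + v) t * (log (1 + u) - log (1 + v)) -
      geomMean u v t * (log u - log v)) t :=
  (hasDerivAt_geomMean (by positivity) (by positivity) t).sub (hasDerivAt_geomMean hu hv t)

lemma hasDerivAt_logGap (hu : 0 < u) (hv : 0 < v) (ht : t ∈ Icc 0 1) :
    HasDerivAt (logGap u v) (logGapDeriv u v t) t :=
  (hasDerivAt_gap hu hv t).log (gap_pos hu hv ht).ne'

lemma hasDerivAt_logGapDeriv (hu : 0 < u) (hv : 0 < v) (ht : t ∈ Icc 0 1) :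
    HasDerivAt (logGapDeriv u v) (logGapDeriv2 u v t) t := by
  have hA := hasDerivAt_geomMean (show 0 < 1 + u by positivity) (show 0 < 1 + v by positivity) t
  have hB := hasDerivAt_geomMean hu hv t
  have hnum := (hA.mul_const (log (1 + u) - log (1 + v))).sub (hB.mul_const (log u - log v))
  have hgap := gap_pos hu hv ht
  exact (hnum.div (hasDerivAt_gap hu hv t) hgap.ne').congr_deriv <| by
    simp only [logGapDeriv2, gap, Pi.sub_apply] at hgap ⊢
    field_simp
    ring

lemma log_one_add_sub_log_injOn : InjOn (fun s : ℝ => log (1 + s) - log s) (Ioi 0) := by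
  intro u (hu : 0 < u) v (hv : 0 < v) h
  simp only [← log_div (by positivity : 1 + u ≠ 0) hu.ne',
    ← log_div (by positivity : 1 + v ≠ 0) hv.ne'] at h
  have := log_injOn_pos (div_pos (by positivity) hu) (div_pos (by positivity) hv) h
  field_simp at this
  linarith

lemma logGapDeriv2_nonpos (hu : 0 < u) (hv : 0 < v) (t : ℝ) : logGapDeriv2 u v t ≤ 0 := by
  have hA := geomMean_pos (show 0 < 1 + u by positivity) (show 0 < 1 + v by positivity) t
  have hB := geomMean_pos hu hv t
  unfold logGapDeriv2
  exact div_nonpos_of_nonpos_of_nonneg (neg_nonpos.2 (by positivity)) (sq_nonneg _)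

lemma logGapDeriv2_neg (hu : 0 < u) (hv : 0 < v) (huv : u ≠ v) (ht : t ∈ Icc 0 1) :
    logGapDeriv2 u v t < 0 := by
  have hpr : (log (1 + u) - log (1 + v)) - (log u - log v) ≠ 0 := fun h =>
    huv (log_one_add_sub_log_injOn hu hv (by simp only; linarith))
  have hA := geomMean_pos (show 0 < 1 + u by positivity) (show 0 < 1 + v by positivity) t
  have hB := geomMean_pos hu hv t
  have hgap := gap_pos hu hv ht
  unfold logGapDeriv2
  exact div_neg_of_neg_of_pos (neg_neg_of_pos (by positivity)) (by positivity)

end Pointwise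

section Regularity

variable {p : ℝ × ℝ × ℝ}

lemma continuousAt_gap (hu : 0 < p.1) (hv : 0 < p.2.1) : ContinuousAt ↿gap p := by
  change ContinuousAt (fun p : ℝ × ℝ × ℝ => gap p.1 p.2.1 p.2.2) p
  unfold gap
  fun_prop (disch := positivity)

lemma continuousOn_logGap : ContinuousOn ↿logGap (Ioi 0 ×ˢ Ioi 0 ×ˢ Icc 0 1) := by
  rintro ⟨u, v, t⟩ ⟨hu, hv, ht⟩
  exact ((continuousAt_gap hu hv).log (gap_pos hu hv ht).ne').continuousWithinAt

lemma continuousOn_logGapDeriv : ContinuousOn ↿logGapDeriv (Ioi 0 ×ˢ Ioi 0 ×ˢ Icc 0 1) := by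
  rintro ⟨u, v, t⟩ ⟨hu : 0 < u, hv : 0 < v, ht⟩
  refine ContinuousAt.continuousWithinAt
    (ContinuousAt.div ?_ (continuousAt_gap hu hv) (gap_pos hu hv ht).ne')
  fun_prop (disch := positivity)

lemma continuousOn_logGapDeriv2 : ContinuousOn ↿logGapDeriv2 (Ioi 0 ×ˢ Ioi 0 ×ˢ Icc 0 1) := by
  rintro ⟨u, v, t⟩ ⟨hu : 0 < u, hv : 0 < v, ht⟩
  refine ContinuousAt.continuousWithinAt (ContinuousAt.div ?_
    ((continuousAt_gap hu hv).pow 2) (pow_ne_zero 2 (gap_pos hu hv ht).ne'))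
  fun_prop (disch := positivity)

lemma measurable_gap : Measurable ↿gap := by
  change Measurable fun p : ℝ × ℝ × ℝ => gap p.1 p.2.1 p.2.2
  unfold gap geomMean
  fun_prop

lemma measurable_logGap : Measurable ↿logGap := measurable_gap.log

lemma measurable_logGapDeriv : Measurable ↿logGapDeriv := by
  change Measurable fun p : ℝ × ℝ × ℝ => logGapDeriv p.1 p.2.1 p.2.2
  unfold logGapDeriv gap geomMean
  fun_prop

lemma measurable_logGapDeriv2 : Measurable ↿logGapDeriv2 := by
  change Measurable fun p : ℝ × ℝ × ℝ => logGapDeriv2 p.1 p.2.1 p.2.2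
  unfold logGapDeriv2 gap geomMean
  fun_prop

end Regularity

section Integral

variable {α : Type*} [MeasurableSpace α] {μ : Measure α} {q₁ q₂ : α → ℝ} {η M : ℝ}

lemma exists_ae_bound_of_continuousOn {F : ℝ → ℝ → ℝ → ℝ} (hη : 0 < η)
    (hF : ContinuousOn ↿F (Ioi 0 ×ˢ Ioi 0 ×ˢ Icc 0 1))
    (hq₁ : ∀ᵐ x ∂μ, q₁ x ∈ Icc η M) (hq₂ : ∀ᵐ x ∂μ, q₂ x ∈ Icc η M) :
    ∃ C, ∀ᵐ x ∂μ, ∀ t ∈ Icc (0 : ℝ) 1, ‖F (q₁ x) (q₂ x) t‖ ≤ C := by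
  have hpos : Icc η M ⊆ Ioi 0 := fun u hu => hη.trans_le hu.1
  obtain ⟨C, hC⟩ :=
    (isCompact_Icc.prod (isCompact_Icc.prod isCompact_Icc)).exists_bound_of_continuousOn
      (hF.mono (prod_mono hpos (prod_mono hpos subset_rfl)))
  exact ⟨C, by filter_upwards [hq₁, hq₂] with x h₁ h₂ t ht using hC (q₁ x, q₂ x, t) ⟨h₁, h₂, ht⟩⟩

lemma aestronglyMeasurable_comp {F : ℝ → ℝ → ℝ → ℝ} (hF : Measurable ↿F)
    (hm₁ : Measurable q₁) (hm₂ : Measurable q₂) (t : ℝ) :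
    AEStronglyMeasurable (fun x => F (q₁ x) (q₂ x) t) μ :=
  (hF.comp (hm₁.prodMk (hm₂.prodMk measurable_const))).aestronglyMeasurable

lemma integrable_of_continuousOn [IsFiniteMeasure μ] {F : ℝ → ℝ → ℝ → ℝ} (hη : 0 < η)
    (hFm : Measurable ↿F) (hF : ContinuousOn ↿F (Ioi 0 ×ˢ Ioi 0 ×ˢ Icc 0 1))
    (hm₁ : Measurable q₁) (hm₂ : Measurable q₂)
    (hq₁ : ∀ᵐ x ∂μ, q₁ x ∈ Icc η M) (hq₂ : ∀ᵐ x ∂μ, q₂ x ∈ Icc η M) {t : ℝ}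
    (ht : t ∈ Icc 0 1) : Integrable (fun x => F (q₁ x) (q₂ x) t) μ := by
  obtain ⟨C, hC⟩ := exists_ae_bound_of_continuousOn hη hF hq₁ hq₂
  exact .of_bound (aestronglyMeasurable_comp hFm hm₁ hm₂ t) C (hC.mono fun x hx => hx t ht)

lemma hasDerivAt_integral_of_continuousOn [IsFiniteMeasure μ] {F F' : ℝ → ℝ → ℝ → ℝ}
    (hη : 0 < η) (hFm : Measurable ↿F) (hF'm : Measurable ↿F')
    (hF : ContinuousOn ↿F (Ioi 0 ×ˢ Ioi 0 ×ˢ Icc 0 1))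
    (hF' : ContinuousOn ↿F' (Ioi 0 ×ˢ Ioi 0 ×ˢ Icc 0 1))
    (hderiv : ∀ u > 0, ∀ v > 0, ∀ t ∈ Ioo (0 : ℝ) 1, HasDerivAt (F u v) (F' u v t) t)
    (hm₁ : Measurable q₁) (hm₂ : Measurable q₂)
    (hq₁ : ∀ᵐ x ∂μ, q₁ x ∈ Icc η M) (hq₂ : ∀ᵐ x ∂μ, q₂ x ∈ Icc η M) {t₀ : ℝ}
    (ht₀ : t₀ ∈ Ioo 0 1) :
    HasDerivAt (fun t => ∫ x, F (q₁ x) (q₂ x) t ∂μ) (∫ x, F' (q₁ x) (q₂ x) t₀ ∂μ) t₀ := by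
  obtain ⟨C, hC⟩ := exists_ae_bound_of_continuousOn hη hF' hq₁ hq₂
  refine (hasDerivAt_integral_of_dominated_loc_of_deriv_le (Ioo_mem_nhds ht₀.1 ht₀.2)
    (.of_forall (aestronglyMeasurable_comp hFm hm₁ hm₂))
    (integrable_of_continuousOn hη hFm hF hm₁ hm₂ hq₁ hq₂ (Ioo_subset_Icc_self ht₀))
    (aestronglyMeasurable_comp hF'm hm₁ hm₂ t₀)
    (hC.mono fun x hx t ht => hx t (Ioo_subset_Icc_self ht)) (integrable_const C) ?_).2
  filter_upwards [hq₁, hq₂] with x h₁ h₂ t ht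
  exact hderiv _ (hη.trans_le h₁.1) _ (hη.trans_le h₂.1) t ht

lemma integral_logGapDeriv2_neg [IsFiniteMeasure μ] (hη : 0 < η)
    (hm₁ : Measurable q₁) (hm₂ : Measurable q₂)
    (hq₁ : ∀ᵐ x ∂μ, q₁ x ∈ Icc η M) (hq₂ : ∀ᵐ x ∂μ, q₂ x ∈ Icc η M)
    (hne : ¬ q₁ =ᵐ[μ] q₂) {t : ℝ} (ht : t ∈ Icc 0 1) :
    ∫ x, logGapDeriv2 (q₁ x) (q₂ x) t ∂μ < 0 := by
  have hint := integrable_of_continuousOn hη measurable_logGapDeriv2 continuousOn_logGapDeriv2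
    hm₁ hm₂ hq₁ hq₂ ht
  rw [← neg_pos, ← integral_neg,
    integral_pos_iff_support_of_nonneg_ae (f := fun x => -logGapDeriv2 (q₁ x) (q₂ x) t) _
      hint.neg]
  · have hne' : μ {x | q₁ x ≠ q₂ x} ≠ 0 := by rwa [EventuallyEq, ae_iff] at hne
    refine (pos_iff_ne_zero.2 hne').trans_le (measure_mono_ae ?_)
    filter_upwards [hq₁, hq₂] with x h₁ h₂ hx
    exact (neg_pos.2 (logGapDeriv2_neg (hη.trans_le h₁.1) (hη.trans_le h₂.1) hx ht)).ne'
  · filter_upwards [hq₁, hq₂] with x h₁ h₂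
    exact neg_nonneg.2 (logGapDeriv2_nonpos (hη.trans_le h₁.1) (hη.trans_le h₂.1) t)

lemma integral_logGap_eq_zero (hη : 0 < η) (hq₂ : ∀ᵐ x ∂μ, q₂ x ∈ Icc η M)
    (heq : q₁ =ᵐ[μ] q₂) (t : ℝ) : ∫ x, logGap (q₁ x) (q₂ x) t ∂μ = 0 :=
  integral_eq_zero_of_ae <| by
    filter_upwards [heq, hq₂] with x hx h₂
    rw [Pi.zero_apply, hx, logGap, gap_self (hη.trans_le h₂.1), log_one]

end Integral

end PsiLimit

open PsiLimit

instance isFiniteMeasure_restrict_cube (ν : ℕ) : IsFiniteMeasure (volume.restrict (cube ν)) :=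
  isFiniteMeasure_restrict.2 <| by
    rw [cube, volume_pi_pi]
    exact ENNReal.prod_ne_top fun _ _ => by simp [Real.volume_Ico, ENNReal.mul_eq_top]

theorem psiLimit_strictly_convex {ν : ℕ}
    (q₁ q₂ : (Fin ν → ℝ) → ℝ) (η M : ℝ) (hη : 0 < η)
    (hmeas₁ : Measurable q₁) (hmeas₂ : Measurable q₂)
    (hq₁ : ∀ᵐ x ∂(volume.restrict (cube ν)), q₁ x ∈ Set.Icc η M)
    (hq₂ : ∀ᵐ x ∂(volume.restrict (cube ν)), q₂ x ∈ Set.Icc η M) :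
    ∃ D₁ D₂ : ℝ → ℝ,
      (∀ t ∈ Set.Ioo (0 : ℝ) 1,
        HasDerivAt (psiLimit q₁ q₂) (D₁ t) t ∧ HasDerivAt D₁ (D₂ t) t) ∧
      (¬ q₁ =ᵐ[volume.restrict (cube ν)] q₂ →
        ∀ t ∈ Set.Ioo (0 : ℝ) 1, 0 < D₂ t) ∧
      (q₁ =ᵐ[volume.restrict (cube ν)] q₂ →
        ∀ t ∈ Set.Icc (0 : ℝ) 1, psiLimit q₁ q₂ t = 0) := by
  set c : ℝ := ((2 * Real.pi) ^ ν)⁻¹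
  have hc : 0 < c := by positivity
  refine ⟨fun t => -(c * ∫ x in cube ν, logGapDeriv (q₁ x) (q₂ x) t),
    fun t => -(c * ∫ x in cube ν, logGapDeriv2 (q₁ x) (q₂ x) t),
    fun t ht => ⟨?_, ?_⟩, fun hne t ht => ?_, fun heq t _ => ?_⟩
  · exact ((hasDerivAt_integral_of_continuousOn hη measurable_logGap measurable_logGapDeriv
      continuousOn_logGap continuousOn_logGapDeriv
      (fun u hu v hv t ht => hasDerivAt_logGap hu hv (Ioo_subset_Icc_self ht))
      hmeas₁ hmeas₂ hq₁ hq₂ ht).const_mul c).neg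
  · exact ((hasDerivAt_integral_of_continuousOn hη measurable_logGapDeriv measurable_logGapDeriv2
      continuousOn_logGapDeriv continuousOn_logGapDeriv2
      (fun u hu v hv t ht => hasDerivAt_logGapDeriv hu hv (Ioo_subset_Icc_self ht))
      hmeas₁ hmeas₂ hq₁ hq₂ ht).const_mul c).neg
  · exact neg_pos.2 (mul_neg_of_pos_of_neg hc
      (integral_logGapDeriv2_neg hη hmeas₁ hmeas₂ hq₁ hq₂ hne (Ioo_subset_Icc_self ht)))
  · change -(c * ∫ x in cube ν, logGap (q₁ x) (q₂ x) t) = 0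
    rw [integral_logGap_eq_zero hη hq₂ heq t, mul_zero, neg_zero]

end
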